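/- Let m ≥ 6, q ≥ 2, and t ∈ {0,1,2} be integers, and set n = q(m+1) - t. Let H be the graph on n+m+1 vertices obtained as the join of a single vertex with the disjoint union of the complete graphs K_{2m-t-2}, K_{m+4}, and q-2 copies of K_{m+1}. Then H contains no cycle of length 2m, and the complement of H contains no subgraph isomorphic to K_{2,n}. -/

import Mathlib

/-- `G` contains a subgraph isomorphic to `H` (not necessarily induced),
i.e. there is an injective graph homomorphism from `H` to `G`. -/
def Contains {V W : Type*} (G : SimpleGraph V) (H : SimpleGraph W) : Prop :=
  ∃ f : H →g G, Function.Injective f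

/-- `G` contains a cycle of length `k`. -/
def HasCycleLength {V : Type*} (G : SimpleGraph V) (k : ℕ) : Prop :=
  ∃ (v : V) (c : G.Walk v v), c.IsCycle ∧ c.length = k

/-- The join of two graphs: their disjoint union together with all edges
between the two vertex sets. -/
def graphJoin {α β : Type*} (G : SimpleGraph α) (H : SimpleGraph β) :
    SimpleGraph (α ⊕ β) where
  Adj u v :=
    match u, v with
    | Sum.inl a, Sum.inl b => G.Adj a b
    | Sum.inr a, Sum.inr b => H.Adj a b
    | _, _ => True
  symm := ⟨by
    rintro (a | a) (b | b) h
    · exact G.symm.symm _ _ h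
    · trivial
    · trivial
    · exact H.symm.symm _ _ h⟩
  loopless := ⟨by
    rintro (a | a) h
    · exact G.loopless.irrefl a h
    · exact H.loopless.irrefl a h⟩

/-- The disjoint union of `p` copies of the complete graph `K_k`. -/
def cliqueCopies (p k : ℕ) : SimpleGraph (Fin p × Fin k) where
  Adj a b := a.1 = b.1 ∧ a ≠ b
  symm := ⟨fun _ _ h => ⟨h.1.symm, h.2.symm⟩⟩
  loopless := ⟨fun _ h => h.2 rfl⟩

/-!
Outside the apex every edge of `H` lies inside one of the cliques, and each clique has at most
`2m - 2` vertices (for `K_{m+4}` this is `m ≥ 6`). A cycle avoiding the apex therefore has at most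
`2m - 2` vertices, and a cycle through it consists of the apex and a path of at most `2m - 2`
vertices inside one clique.

The complement of `H` is an isolated vertex together with the complete multipartite graph whose
parts are the cliques, so a vertex of a clique of size `s` has `|H| - 1 - s` neighbours there.
This is at most `n - 1`, attained on the copies of `K_{m+1}`; a `K_{2,n}` would need a vertex with
`n` neighbours.
-/

open Set

theorem encard_setOf_fst_eq {α β : Type*} (a : α) :
    {x : α × β | x.1 = a}.encard = ENat.card β := by
  have : {x : α × β | x.1 = a} = Prod.mk a '' univ := by
    ext ⟨a', b⟩
    simp [eq_comm]
  rw [this, (Prod.mk_right_injective a).encard_image, encard_univ]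

namespace SimpleGraph

variable {V W ι κ : Type*}

section Labelling

variable {G : SimpleGraph V} {a : V} {c : V → ι} {k : ℕ}

theorem Walk.label_eq_of_notMem_support
    (hc : ∀ ⦃u v⦄, G.Adj u v → u ≠ a → v ≠ a → c u = c v) :
    ∀ {u v : V} (p : G.Walk u v), a ∉ p.support → ∀ x ∈ p.support, c x = c u
  | _, _, .nil, _, x, hx => by rw [List.mem_singleton.mp hx]
  | _, _, .cons h p, ha, x, hx => by
    rw [Walk.support_cons, List.mem_cons, not_or] at ha
    rw [Walk.support_cons, List.mem_cons] at hx
    rcases hx with rfl | hx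
    · rfl
    · rw [label_eq_of_notMem_support hc p ha.2 x hx,
        hc h (Ne.symm ha.1) fun h' => ha.2 (h' ▸ p.start_mem_support)]

theorem Walk.IsPath.length_lt_of_label
    (hc : ∀ ⦃u v⦄, G.Adj u v → u ≠ a → v ≠ a → c u = c v)
    (hk : ∀ i, {v | v ≠ a ∧ c v = i}.encard ≤ k)
    {u v : V} {p : G.Walk u v} (hp : p.IsPath) (ha : a ∉ p.support) : p.length < k := by
  classical
  have hsub : (p.support.toFinset : Set V) ⊆ {v | v ≠ a ∧ c v = c u} := fun x hx => by
    rw [Finset.mem_coe, List.mem_toFinset] at hx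
    exact ⟨fun h => ha (h ▸ hx), p.label_eq_of_notMem_support hc ha x hx⟩
  have hcard : p.support.toFinset.card = p.length + 1 := by
    rw [List.toFinset_card_of_nodup hp.support_nodup, Walk.length_support]
  have := (encard_le_encard hsub).trans (hk _)
  rw [encard_coe_eq_coe_finsetCard, hcard] at this
  exact_mod_cast this

theorem Walk.IsCycle.length_le_of_label
    (hc : ∀ ⦃u v⦄, G.Adj u v → u ≠ a → v ≠ a → c u = c v)
    (hk : ∀ i, {v | v ≠ a ∧ c v = i}.encard ≤ k)
    {u : V} {p : G.Walk u u} (hp : p.IsCycle) : p.length ≤ k + 1 := by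
  classical
  by_cases ha : a ∈ p.support
  · -- rotated to start at `a`, the cycle is `a`, then a path avoiding `a`, then `a` again
    have hrot := hp.rotate ha
    rw [← Walk.length_rotate p a ha]
    cases h : p.rotate a ha with
    | nil => exact absurd hrot (h ▸ Walk.not_isCycle_nil)
    | cons hadj q =>
      rw [h, Walk.cons_isCycle_iff] at hrot
      obtain ⟨_, _, r, hr⟩ := Walk.exists_eq_cons_of_ne hadj.ne q.reverse
      have hrpath := hrot.1.reverse
      rw [hr, Walk.cons_isPath_iff] at hrpath
      have hlen := congrArg Walk.length hr
      rw [Walk.length_reverse, Walk.length_cons] at hlen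
      have := hrpath.1.length_lt_of_label hc hk hrpath.2
      rw [Walk.length_cons]
      omega
  · cases p with
    | nil => exact absurd hp Walk.not_isCycle_nil
    | cons hadj q =>
      rw [Walk.cons_isCycle_iff] at hp
      rw [Walk.support_cons, List.mem_cons, not_or] at ha
      have := hp.1.length_lt_of_label hc hk ha.2
      rw [Walk.length_cons]
      omega

end Labelling

abbrev cone (G : SimpleGraph W) : SimpleGraph (Fin 1 ⊕ W) := graphJoin ⊤ G

abbrev cliqueUnion (A B p r : ℕ) : SimpleGraph (Fin A ⊕ (Fin B ⊕ Fin p × Fin r)) :=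
  (⊤ : SimpleGraph (Fin A)) ⊕g ((⊤ : SimpleGraph (Fin B)) ⊕g cliqueCopies p r)

theorem Walk.IsCycle.length_le_cone_of_label {G : SimpleGraph W} {b : W → ι} {k : ℕ}
    (hb : ∀ ⦃x y⦄, G.Adj x y → b x = b y) (hk : ∀ i, {w | b w = i}.encard ≤ k)
    {u : Fin 1 ⊕ W} {p : (cone G).Walk u u} (hp : p.IsCycle) : p.length ≤ k + 1 := by
  refine hp.length_le_of_label (a := .inl 0) (c := Sum.elim (fun _ => none) (some ∘ b)) ?_ ?_
  · rintro (x | x) (y | y) h hx hy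
    · exact absurd (congrArg _ (Subsingleton.elim x 0)) hx
    · exact absurd (congrArg _ (Subsingleton.elim x 0)) hx
    · exact absurd (congrArg _ (Subsingleton.elim y 0)) hy
    · exact congrArg some (hb h)
  · rintro (_ | i)
    · refine (encard_eq_zero.mpr ?_).trans_le zero_le
      rw [eq_empty_iff_forall_notMem]
      rintro (x | x) ⟨hx, hc⟩
      · exact hx (congrArg _ (Subsingleton.elim x 0))
      · cases hc
    · refine (encard_le_encard (t := Sum.inr '' {w | b w = i}) ?_).trans ?_
      · rintro (x | x) ⟨hx, hc⟩
        · cases hc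
        · exact ⟨x, Option.some_injective _ hc, rfl⟩
      · exact (Sum.inr_injective.encard_image _).trans_le (hk i)

theorem sum_adj_imp_sumMap_eq {G : SimpleGraph V} {H : SimpleGraph W} {f : V → ι} {g : W → κ}
    (hf : ∀ ⦃x y⦄, G.Adj x y → f x = f y) (hg : ∀ ⦃x y⦄, H.Adj x y → g x = g y) :
    ∀ ⦃x y⦄, (G ⊕g H).Adj x y → Sum.map f g x = Sum.map f g y := by
  rintro (x | x) (y | y) h
  · exact congrArg Sum.inl (hf h)
  · cases h
  · cases h
  · exact congrArg Sum.inr (hg h)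

theorem encard_sumMap_fiber_le {f : V → ι} {g : W → κ} {k : ℕ∞}
    (hf : ∀ i, {x | f x = i}.encard ≤ k) (hg : ∀ j, {y | g y = j}.encard ≤ k) :
    ∀ i, {z | Sum.map f g z = i}.encard ≤ k := by
  rintro (i | j)
  · have : {z | Sum.map f g z = .inl i} = Sum.inl '' {x | f x = i} := by
      ext (x | y) <;> simp
    rw [this, Sum.inl_injective.encard_image]
    exact hf i
  · have : {z | Sum.map f g z = .inr j} = Sum.inr '' {y | g y = j} := by
      ext (x | y) <;> simp
    rw [this, Sum.inr_injective.encard_image]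
    exact hg j

theorem Walk.IsCycle.length_le_cone_cliqueUnion {A B p r : ℕ} {u : Fin 1 ⊕ _}
    {c : (cone (cliqueUnion A B p r)).Walk u u} (hc : c.IsCycle) :
    c.length ≤ max A (max B r) + 1 := by
  refine hc.length_le_cone_of_label (b := Sum.map (fun _ => ()) (Sum.map (fun _ => ()) Prod.fst))
    (sum_adj_imp_sumMap_eq (fun _ _ _ => rfl) (sum_adj_imp_sumMap_eq (fun _ _ _ => rfl)
      fun _ _ (h : (cliqueCopies p r).Adj _ _) => h.1)) ?_
  refine encard_sumMap_fiber_le (fun _ => encard_le_card.trans ?_)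
    (encard_sumMap_fiber_le (fun _ => encard_le_card.trans ?_) fun j => ?_) <;>
  simp [encard_setOf_fst_eq]

theorem compl_graphJoin (G : SimpleGraph V) (H : SimpleGraph W) :
    (graphJoin G H)ᶜ = Gᶜ ⊕g Hᶜ := by
  ext (x | x) (y | y) <;> simp [graphJoin]

theorem compl_sum (G : SimpleGraph V) (H : SimpleGraph W) :
    (G ⊕g H)ᶜ = graphJoin Gᶜ Hᶜ := by
  ext (x | x) (y | y) <;> simp [graphJoin]

theorem neighborSet_graphJoin_inl (G : SimpleGraph V) (H : SimpleGraph W) (v : V) :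
    (graphJoin G H).neighborSet (.inl v) = Sum.inl '' G.neighborSet v ∪ range Sum.inr := by
  ext (x | x) <;> simp [graphJoin]

theorem neighborSet_graphJoin_inr (G : SimpleGraph V) (H : SimpleGraph W) (w : W) :
    (graphJoin G H).neighborSet (.inr w) = range Sum.inl ∪ Sum.inr '' H.neighborSet w := by
  ext (x | x) <;> simp [graphJoin]

theorem ncard_neighborSet_graphJoin_inl [Finite V] [Finite W] (G : SimpleGraph V)
    (H : SimpleGraph W) (v : V) :
    ((graphJoin G H).neighborSet (.inl v)).ncard = (G.neighborSet v).ncard + Nat.card W := by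
  rw [neighborSet_graphJoin_inl, ncard_union_eq (by simp),
    ncard_image_of_injective _ Sum.inl_injective, ncard_range_of_injective Sum.inr_injective]

theorem ncard_neighborSet_graphJoin_inr [Finite V] [Finite W] (G : SimpleGraph V)
    (H : SimpleGraph W) (w : W) :
    ((graphJoin G H).neighborSet (.inr w)).ncard = Nat.card V + (H.neighborSet w).ncard := by
  rw [neighborSet_graphJoin_inr, ncard_union_eq (by simp),
    ncard_image_of_injective _ Sum.inr_injective, ncard_range_of_injective Sum.inl_injective]

theorem ncard_neighborSet_sum_inl (G : SimpleGraph V) (H : SimpleGraph W) (v : V) :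
    ((G ⊕g H).neighborSet (.inl v)).ncard = (G.neighborSet v).ncard := by
  rw [neighborSet_sum_inl, ncard_image_of_injective _ Sum.inl_injective]

theorem ncard_neighborSet_sum_inr (G : SimpleGraph V) (H : SimpleGraph W) (w : W) :
    ((G ⊕g H).neighborSet (.inr w)).ncard = (H.neighborSet w).ncard := by
  rw [neighborSet_sum_inr, ncard_image_of_injective _ Sum.inr_injective]

theorem ncard_neighborSet_compl_cliqueCopies (p r : ℕ) (x : Fin p × Fin r) :
    ((cliqueCopies p r)ᶜ.neighborSet x).ncard = (p - 1) * r := by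
  have : (cliqueCopies p r)ᶜ.neighborSet x = {x.1}ᶜ ×ˢ univ := by
    ext ⟨i, y⟩
    simp only [mem_neighborSet, compl_adj, cliqueCopies, mem_prod, mem_compl_iff,
      mem_singleton_iff, mem_univ, and_true]
    grind
  rw [this, ncard_prod, ncard_univ, ncard_compl, ncard_singleton]
  simp

theorem ncard_neighborSet_compl_cone_cliqueUnion_lt {A B p r n : ℕ} (hn : 0 < n)
    (hA : B + p * r < n) (hB : A + p * r < n) (hr : 0 < p → A + B + (p - 1) * r < n) :
    ∀ v, ((cone (cliqueUnion A B p r))ᶜ.neighborSet v).ncard < n := by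
  simp only [cone, cliqueUnion, compl_graphJoin, compl_sum, compl_top]
  rintro (v | w | w | x)
  · simpa [ncard_neighborSet_sum_inl] using hn
  · simpa [ncard_neighborSet_sum_inr, ncard_neighborSet_graphJoin_inl] using hA
  · simpa [ncard_neighborSet_sum_inr, ncard_neighborSet_graphJoin_inl,
      ncard_neighborSet_graphJoin_inr] using hB
  · simpa [ncard_neighborSet_sum_inr, ncard_neighborSet_graphJoin_inr,
      ncard_neighborSet_compl_cliqueCopies, add_assoc] using hr (Fin.pos x.1)

theorem not_contains_completeBipartiteGraph_of_ncard_neighborSet_lt [Finite V]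
    {α β : Type*} [Nonempty α] [Finite β] {G : SimpleGraph V}
    (h : ∀ v, (G.neighborSet v).ncard < Nat.card β) :
    ¬ Contains G (completeBipartiteGraph α β) := by
  rintro ⟨f, hf⟩
  obtain ⟨a⟩ := ‹Nonempty α›
  refine (h (f (.inl a))).not_ge ?_
  calc Nat.card β = (range (f ∘ Sum.inr)).ncard :=
        (ncard_range_of_injective (hf.comp Sum.inr_injective)).symm
    _ ≤ (G.neighborSet (f (.inl a))).ncard := by
        refine ncard_le_ncard ?_
        rintro _ ⟨b, rfl⟩
        exact f.map_adj (by simp)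

end SimpleGraph

open SimpleGraph

/-- For `m ≥ 6`, `q ≥ 2`, `t ∈ {0, 1, 2}` and `n = q(m+1) - t`, the join of a
single vertex with `K_{2m-t-2} ∪ K_{m+4} ∪ (q-2) · K_{m+1}` has no cycle of
length `2m`, and its complement contains no `K_{2,n}`. -/
theorem construction_two (m q t n : ℕ) (hm : 6 ≤ m) (hq : 2 ≤ q)
    (ht : t ≤ 2) (hn : n = q * (m + 1) - t) :
    ¬ HasCycleLength
        (graphJoin (⊤ : SimpleGraph (Fin 1))
          ((⊤ : SimpleGraph (Fin (2 * m - t - 2))) ⊕g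
            ((⊤ : SimpleGraph (Fin (m + 4))) ⊕g cliqueCopies (q - 2) (m + 1))))
        (2 * m) ∧
    ¬ Contains
        (graphJoin (⊤ : SimpleGraph (Fin 1))
          ((⊤ : SimpleGraph (Fin (2 * m - t - 2))) ⊕g
            ((⊤ : SimpleGraph (Fin (m + 4))) ⊕g cliqueCopies (q - 2) (m + 1))))ᶜ
        (completeBipartiteGraph (Fin 2) (Fin n)) := by
  refine ⟨fun ⟨_, c, hc, hlen⟩ => ?_, ?_⟩
  · have := hc.length_le_cone_cliqueUnion
    omega
  · have hsplit₂ : (q - 2) * (m + 1) + 2 * (m + 1) = q * (m + 1) := by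
      rw [← Nat.add_mul, Nat.sub_add_cancel hq]
    have hsplit₃ (hp : 0 < q - 2) : (q - 2 - 1) * (m + 1) + (m + 1) = (q - 2) * (m + 1) := by
      rw [← Nat.succ_mul, Nat.succ_eq_add_one, Nat.sub_add_cancel hp]
    refine not_contains_completeBipartiteGraph_of_ncard_neighborSet_lt fun v => ?_
    rw [Nat.card_fin]
    exact ncard_neighborSet_compl_cone_cliqueUnion_lt (by omega) (by omega) (by omega)
      (fun hp => by have := hsplit₃ hp; omega) v
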